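/- arXiv:1505.03939 — 6 statements merged into one kernel-verified Lean document; each statement's English description precedes it below -/
import Mathlib

section
/- Let X be a compact subset of ℂⁿ and let g be a continuous function on X that is a uniform limit of polynomials on X (i.e., g ∈ P(X)), such that the uniform algebra P(g(X)) equals C(g(X)). Then X is polynomially convex if and only if each fiber g⁻¹(t), t ∈ ℂ, is polynomially convex. -/
open MvPolynomial

/-- The polynomially convex hull of a set `X ⊆ ℂⁿ`. -/
noncomputable def polyHull (n : ℕ) (X : Set (Fin n → ℂ)) : Set (Fin n → ℂ) :=
  {z | ∀ p : MvPolynomial (Fin n) ℂ, ‖eval z p‖ ≤ sSup ((fun x => ‖eval x p‖) '' X)}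

/-- `X` is polynomially convex when it equals its polynomially convex hull. -/
def IsPolyConvex (n : ℕ) (X : Set (Fin n → ℂ)) : Prop := polyHull n X = X

/-- `P(X)`: the uniform closure in `C(X)` of the holomorphic polynomials restricted to `X`. -/
noncomputable def polyAlg (n : ℕ) (X : Set (Fin n → ℂ)) : Set C(X, ℂ) :=
  closure {f : C(X, ℂ) | ∃ p : MvPolynomial (Fin n) ℂ, ∀ x : X, f x = eval (x : Fin n → ℂ) p}

/-- `P(Y)` for a compact subset `Y ⊆ ℂ`. -/
noncomputable def polyAlg1 (Y : Set ℂ) : Set C(Y, ℂ) :=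
  closure {f : C(Y, ℂ) | ∃ p : Polynomial ℂ, ∀ y : Y, f y = p.eval (y : ℂ)}

/-! For `z` in the hull of `X`, evaluation at `z` is bounded by the sup norm on `X`, so if
polynomials `P k` converge to `g` uniformly on `X`, then `P k (z)` converges to some `t`, and
`|p(z)| |q(t)| ≤ sup_X |p · q ∘ g|` for all polynomials `p` and `q`. If `t ∉ g(X)`, taking `p = 1`
and `q = 1 - (w - t) r` with `r` close to `1 / (w - t)` on `g(X)` gives a contradiction. Because polynomials are dense in `C(g(X))`, `q` may
then be any continuous function on `g(X)`, and a Urysohn bump at `t` shows that `z` lies in the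
hull of the fibre `g⁻¹(t)`. Conversely, if `X` is polynomially convex, a point `z` of the hull of
a fibre `g⁻¹(t)` lies in `X`, and `|P k (z) - t| ≤ ‖P k - g‖_X` forces `g(z) = t`. -/

open Filter Topology

namespace MvPolynomial

lemma eval_polynomial_aeval {σ R : Type*} [CommSemiring R] (z : σ → R) (P : MvPolynomial σ R)
    (q : Polynomial R) : eval z (Polynomial.aeval P q) = q.eval (eval z P) := by
  simpa [Polynomial.coe_aeval_eq_eval, coe_aeval_eq_eval] using
    (Polynomial.aeval_algHom_apply (aeval z) P q).symm

@[simps]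
noncomputable def toContinuousMapOnAlgHom {σ R : Type*} [CommSemiring R] [TopologicalSpace R]
    [IsTopologicalSemiring R] (s : Set (σ → R)) : MvPolynomial σ R →ₐ[R] C(s, R) where
  toFun p := ⟨fun x => eval (x : σ → R) p, (continuous_eval p).comp continuous_subtype_val⟩
  map_one' := by ext; simp
  map_mul' _ _ := by ext; simp
  map_zero' := by ext; simp
  map_add' _ _ := by ext; simp
  commutes' _ := by ext; simp

end MvPolynomial

namespace ContinuousMap

variable {α β : Type*} [TopologicalSpace α] [TopologicalSpace β]

def rangeFactorization (f : C(α, β)) : C(α, Set.range f) :=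
  ⟨Set.rangeFactorization f, f.continuous.subtype_mk _⟩

@[simp]
lemma coe_rangeFactorization_apply (f : C(α, β)) (x : α) : (f.rangeFactorization x : β) = f x :=
  rfl

end ContinuousMap

lemma exists_continuous_one_zero_of_forall_ne {α β : Type*} [TopologicalSpace α] [CompactSpace α]
    [TopologicalSpace β] [T4Space β] {g : α → β} (hg : Continuous g) {K : Set α}
    (hK : IsClosed K) {y : β} (hy : ∀ x ∈ K, g x ≠ y) :
    ∃ φ : C(β, ℝ), φ y = 1 ∧ (∀ x ∈ K, φ (g x) = 0) ∧ ∀ b, φ b ∈ Set.Icc 0 1 := by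
  have hdisj : Disjoint (g '' K) {y} :=
    Set.disjoint_singleton_right.2 fun ⟨x, hx, hxy⟩ => hy x hx hxy
  obtain ⟨φ, hφK, hφy, hφ⟩ :=
    exists_continuous_zero_one_of_isClosed (hg.isClosedMap K hK) isClosed_singleton hdisj
  exact ⟨φ, hφy rfl, fun x hx => hφK ⟨x, hx, rfl⟩, hφ⟩

lemma Polynomial.exists_norm_toContinuousMapOnAlgHom_lt_of_notMem {Y : Set ℂ} [CompactSpace Y]
    (hY : DenseRange (Polynomial.toContinuousMapOnAlgHom Y)) {t : ℂ} (ht : t ∉ Y) :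
    ∃ q : Polynomial ℂ, ‖Polynomial.toContinuousMapOnAlgHom Y q‖ < ‖q.eval t‖ := by
  set u := Polynomial.toContinuousMapOnAlgHom Y (Polynomial.X - Polynomial.C t)
  have hne : ∀ y : Y, (y : ℂ) - t ≠ 0 := fun y => sub_ne_zero.2 (ne_of_mem_of_not_mem y.2 ht)
  let v : C(Y, ℂ) := ⟨fun y => ((y : ℂ) - t)⁻¹,
    (continuous_subtype_val.sub continuous_const).inv₀ hne⟩
  have hU : IsOpen {f : C(Y, ℂ) | ‖1 - u * f‖ < 1} := isOpen_lt (by fun_prop) continuous_const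
  have hv : ‖1 - u * v‖ < 1 := by
    have : 1 - u * v = 0 := by ext y; simp [u, v, hne y]
    simp [this]
  obtain ⟨q, hq⟩ := hY.exists_mem_open hU ⟨v, hv⟩
  refine ⟨1 - (Polynomial.X - Polynomial.C t) * q, ?_⟩
  rw [map_sub, map_one, map_mul]
  simpa [u] using hq

section PolyHull

variable {n : ℕ} {X K : Set (Fin n → ℂ)} {z : Fin n → ℂ} {g : C(X, ℂ)}

lemma polyAlg_eq_closure_range :
    polyAlg n X = closure (Set.range (toContinuousMapOnAlgHom X)) := by
  unfold polyAlg
  congr 1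
  ext f
  exact ⟨fun ⟨p, hp⟩ => ⟨p, ContinuousMap.ext fun x => (hp x).symm⟩,
    fun ⟨p, hp⟩ => ⟨p, fun x => by simp [← hp]⟩⟩

lemma polyAlg1_eq_closure_range (Y : Set ℂ) :
    polyAlg1 Y = closure (Set.range (Polynomial.toContinuousMapOnAlgHom Y)) := by
  unfold polyAlg1
  congr 1
  ext f
  exact ⟨fun ⟨p, hp⟩ => ⟨p, ContinuousMap.ext fun y => (hp y).symm⟩,
    fun ⟨p, hp⟩ => ⟨p, fun y => by simp [← hp]⟩⟩

variable [CompactSpace X]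

lemma sSup_norm_eval_image (p : MvPolynomial (Fin n) ℂ) :
    sSup ((fun x => ‖eval x p‖) '' X) = ‖toContinuousMapOnAlgHom X p‖ := by
  rw [ContinuousMap.norm_eq_iSup_norm, Set.image_eq_range]
  rfl

lemma mem_polyHull_iff : z ∈ polyHull n X ↔ ∀ p, ‖eval z p‖ ≤ ‖toContinuousMapOnAlgHom X p‖ := by
  simp only [polyHull, Set.mem_ofPred_eq, sSup_norm_eval_image]

lemma subset_polyHull : X ⊆ polyHull n X := fun x hx =>
  mem_polyHull_iff.2 fun p => (toContinuousMapOnAlgHom X p).norm_coe_le_norm ⟨x, hx⟩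

lemma polyHull_mono [CompactSpace K] (hKX : K ⊆ X) : polyHull n K ⊆ polyHull n X := fun _ hz =>
  mem_polyHull_iff.2 fun p => (mem_polyHull_iff.1 hz p).trans <|
    (ContinuousMap.norm_le _ (norm_nonneg _)).2 fun x =>
      (toContinuousMapOnAlgHom X p).norm_coe_le_norm ⟨x, hKX x.2⟩

lemma isCompact_image_val_fiber (g : C(X, ℂ)) (t : ℂ) :
    IsCompact (Subtype.val '' (g ⁻¹' {t})) :=
  (isClosed_singleton.preimage g.continuous).isCompact.image continuous_subtype_val

lemma exists_tendsto_toContinuousMapOnAlgHom (hg : g ∈ polyAlg n X) :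
    ∃ P : ℕ → MvPolynomial (Fin n) ℂ,
      Tendsto (fun k => toContinuousMapOnAlgHom X (P k)) atTop (𝓝 g) := by
  rw [polyAlg_eq_closure_range] at hg
  obtain ⟨f, hf, hfg⟩ := mem_closure_iff_seq_limit.1 hg
  choose P hP using hf
  exact ⟨P, by simpa only [hP] using hfg⟩

lemma polyHull_fiber_subset (hg : g ∈ polyAlg n X) (hX : IsPolyConvex n X) (t : ℂ) :
    polyHull n (Subtype.val '' (g ⁻¹' {t})) ⊆ Subtype.val '' (g ⁻¹' {t}) := by
  have := isCompact_iff_compactSpace.1 (isCompact_image_val_fiber g t)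
  intro z hz
  have hzX : z ∈ X := hX ▸ polyHull_mono (Subtype.coe_image_subset X _) hz
  refine ⟨⟨z, hzX⟩, ?_, rfl⟩
  obtain ⟨P, hP⟩ := exists_tendsto_toContinuousMapOnAlgHom hg
  have hbound : ∀ k, ‖eval z (P k - C t)‖ ≤ ‖toContinuousMapOnAlgHom X (P k) - g‖ := fun k =>
    (mem_polyHull_iff.1 hz _).trans <| (ContinuousMap.norm_le _ (norm_nonneg _)).2 <| by
      rintro ⟨_, x, rfl : g x = t, rfl⟩
      simpa using (toContinuousMapOnAlgHom X (P k) - g).norm_coe_le_norm x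
  have hlim : Tendsto (fun k => ‖eval z (P k - C t)‖) atTop (𝓝 ‖g ⟨z, hzX⟩ - t‖) := by
    simpa using (((continuous_eval_const (⟨z, hzX⟩ : X)).tendsto g).comp hP).sub_const t |>.norm
  have := le_of_tendsto_of_tendsto' hlim (tendsto_iff_norm_sub_tendsto_zero.1 hP) hbound
  simpa [sub_eq_zero] using this

lemma cauchySeq_eval_of_mem_polyHull (hz : z ∈ polyHull n X) {P : ℕ → MvPolynomial (Fin n) ℂ}
    (hP : CauchySeq fun k => toContinuousMapOnAlgHom X (P k)) :
    CauchySeq fun k => eval z (P k) := by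
  rw [Metric.cauchySeq_iff] at hP ⊢
  intro ε hε
  obtain ⟨N, hN⟩ := hP ε hε
  refine ⟨N, fun k hk m hm => ?_⟩
  rw [dist_eq_norm, ← map_sub]
  refine (mem_polyHull_iff.1 hz _).trans_lt ?_
  simpa [dist_eq_norm] using hN k hk m hm

lemma exists_tendsto_eval_of_mem_polyHull (hz : z ∈ polyHull n X) (hg : g ∈ polyAlg n X) :
    ∃ (P : ℕ → MvPolynomial (Fin n) ℂ) (t : ℂ),
      Tendsto (fun k => toContinuousMapOnAlgHom X (P k)) atTop (𝓝 g) ∧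
        Tendsto (fun k => eval z (P k)) atTop (𝓝 t) := by
  obtain ⟨P, hP⟩ := exists_tendsto_toContinuousMapOnAlgHom hg
  obtain ⟨t, ht⟩ := cauchySeq_tendsto_of_complete (cauchySeq_eval_of_mem_polyHull hz hP.cauchySeq)
  exact ⟨P, t, hP, ht⟩

variable {P : ℕ → MvPolynomial (Fin n) ℂ} {t : ℂ}

lemma norm_eval_mul_norm_eval_le (hz : z ∈ polyHull n X)
    (hP : Tendsto (fun k => toContinuousMapOnAlgHom X (P k)) atTop (𝓝 g))
    (ht : Tendsto (fun k => eval z (P k)) atTop (𝓝 t)) (p : MvPolynomial (Fin n) ℂ)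
    (q : Polynomial ℂ) :
    ‖eval z p‖ * ‖q.eval t‖ ≤ ‖toContinuousMapOnAlgHom X p * Polynomial.aeval g q‖ := by
  -- the hull inequality for the polynomial `p * q(P k)`, in the limit `k → ∞`
  refine le_of_tendsto_of_tendsto' (tendsto_const_nhds.mul ((q.continuous.tendsto t).comp ht).norm)
    ((((continuous_const.mul q.continuous_aeval).tendsto g).comp hP).norm) fun k => ?_
  simpa [eval_polynomial_aeval, ← Polynomial.aeval_algHom_apply] using
    mem_polyHull_iff.1 hz (p * Polynomial.aeval (P k) q)

lemma mem_range_of_tendsto_eval (hz : z ∈ polyHull n X)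
    (hgY : DenseRange (Polynomial.toContinuousMapOnAlgHom (Set.range g)))
    (hP : Tendsto (fun k => toContinuousMapOnAlgHom X (P k)) atTop (𝓝 g))
    (ht : Tendsto (fun k => eval z (P k)) atTop (𝓝 t)) : t ∈ Set.range g := by
  have := isCompact_iff_compactSpace.1 (isCompact_range g.continuous)
  by_contra htg
  obtain ⟨q, hq⟩ := Polynomial.exists_norm_toContinuousMapOnAlgHom_lt_of_notMem hgY htg
  have hle : ‖Polynomial.aeval g q‖ ≤ ‖Polynomial.toContinuousMapOnAlgHom (Set.range g) q‖ :=
    (ContinuousMap.norm_le _ (norm_nonneg _)).2 fun x => by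
      simpa using (Polynomial.toContinuousMapOnAlgHom _ q).norm_coe_le_norm
        (⟨g x, x, rfl⟩ : Set.range g)
  have := norm_eval_mul_norm_eval_le hz hP ht 1 q
  simp only [map_one, norm_one, one_mul] at this
  exact (this.trans hle).not_gt hq

lemma norm_eval_mul_norm_apply_le (hz : z ∈ polyHull n X)
    (hgY : DenseRange (Polynomial.toContinuousMapOnAlgHom (Set.range g)))
    (hP : Tendsto (fun k => toContinuousMapOnAlgHom X (P k)) atTop (𝓝 g))
    (ht : Tendsto (fun k => eval z (P k)) atTop (𝓝 t)) (htg : t ∈ Set.range g)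
    (p : MvPolynomial (Fin n) ℂ) (φ : C(Set.range g, ℂ)) :
    ‖eval z p‖ * ‖φ ⟨t, htg⟩‖ ≤ ‖toContinuousMapOnAlgHom X p * φ.comp g.rangeFactorization‖ := by
  induction φ using hgY.induction_on with
  | hp => exact isClosed_le (by fun_prop) (by fun_prop)
  | ih q =>
    convert norm_eval_mul_norm_eval_le hz hP ht p q using 3
    · simp
    · ext x
      simp

lemma exists_mem_polyHull_fiber (hz : z ∈ polyHull n X) (hg : g ∈ polyAlg n X)
    (hgY : DenseRange (Polynomial.toContinuousMapOnAlgHom (Set.range g))) :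
    ∃ t, z ∈ polyHull n (Subtype.val '' (g ⁻¹' {t})) := by
  obtain ⟨P, t, hP, ht⟩ := exists_tendsto_eval_of_mem_polyHull hz hg
  have htg := mem_range_of_tendsto_eval hz hgY hP ht
  have := isCompact_iff_compactSpace.1 (isCompact_image_val_fiber g t)
  refine ⟨t, mem_polyHull_iff.2 fun p => le_of_forall_pos_le_add fun ε hε => ?_⟩
  set M := ‖toContinuousMapOnAlgHom (Subtype.val '' (g ⁻¹' {t})) p‖
  set K := {x : X | M + ε ≤ ‖eval (x : Fin n → ℂ) p‖}
  have hK : IsClosed K :=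
    isClosed_le continuous_const ((continuous_eval p).comp continuous_subtype_val).norm
  have hKt : ∀ x ∈ K, g.rangeFactorization x ≠ ⟨t, htg⟩ := fun x hx hxt => by
    have hfib : (x : Fin n → ℂ) ∈ Subtype.val '' (g ⁻¹' {t}) := ⟨x, congrArg Subtype.val hxt, rfl⟩
    have := (toContinuousMapOnAlgHom _ p).norm_coe_le_norm ⟨x, hfib⟩
    simp only [toContinuousMapOnAlgHom_apply_apply] at this
    linarith [show M + ε ≤ ‖eval (x : Fin n → ℂ) p‖ from hx]
  obtain ⟨φ, hφt, hφK, hφ⟩ :=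
    exists_continuous_one_zero_of_forall_ne g.rangeFactorization.continuous hK hKt
  let ψ : C(Set.range g, ℂ) := ⟨fun y => (φ y : ℂ), by fun_prop⟩
  calc ‖eval z p‖ = ‖eval z p‖ * ‖ψ ⟨t, htg⟩‖ := by simp [ψ, hφt]
    _ ≤ ‖toContinuousMapOnAlgHom X p * ψ.comp g.rangeFactorization‖ :=
      norm_eval_mul_norm_apply_le hz hgY hP ht htg p ψ
    _ ≤ M + ε := by
      refine (ContinuousMap.norm_le _ (add_nonneg (norm_nonneg _) hε.le)).2 fun x => ?_
      have hφx := hφ (g.rangeFactorization x)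
      by_cases hx : x ∈ K
      · simpa [ψ, hφK x hx] using add_nonneg (norm_nonneg _) hε.le
      · calc ‖(toContinuousMapOnAlgHom X p * ψ.comp g.rangeFactorization) x‖
            = ‖eval (x : Fin n → ℂ) p‖ * φ (g.rangeFactorization x) := by
              simp [ψ, abs_of_nonneg hφx.1]
          _ ≤ ‖eval (x : Fin n → ℂ) p‖ * 1 := mul_le_mul_of_nonneg_left hφx.2 (norm_nonneg _)
          _ ≤ M + ε := by simpa using (not_le.1 hx).le

end PolyHull

theorem stmt0 (n : ℕ) (X : Set (Fin n → ℂ)) (hX : IsCompact X)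
    (g : C(X, ℂ)) (hg : g ∈ polyAlg n X)
    (hgX : polyAlg1 (Set.range g) = Set.univ) :
    IsPolyConvex n X ↔
      ∀ t : ℂ, IsPolyConvex n (Subtype.val '' (g ⁻¹' {t})) := by
  have := isCompact_iff_compactSpace.1 hX
  constructor
  · intro hconv t
    have := isCompact_iff_compactSpace.1 (isCompact_image_val_fiber g t)
    exact (polyHull_fiber_subset hg hconv t).antisymm subset_polyHull
  · intro hfib
    have hgY : DenseRange (Polynomial.toContinuousMapOnAlgHom (Set.range g)) := by
      rw [DenseRange, dense_iff_closure_eq, ← polyAlg1_eq_closure_range, hgX]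
    refine Set.Subset.antisymm (fun z hz => ?_) subset_polyHull
    obtain ⟨t, hzt⟩ := exists_mem_polyHull_fiber hz hg hgY
    rw [hfib t] at hzt
    exact Subtype.coe_image_subset X _ hzt
end

section
/- Let X be a compact subset of ℂⁿ, let g ∈ P(X) satisfy P(g(X)) = C(g(X)), and suppose X is polynomially convex. Then P(X) = C(X) if and only if for each t ∈ ℂ the fiber X_t = g⁻¹(t) satisfies P(X_t) = C(X_t). -/
open MvPolynomial

/-! `P(X)` is a closed subalgebra of `C(X)` containing `χ ∘ g` for every `χ ∈ C(g(X))`, since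
such `χ` are uniform limits of polynomials in one variable and `g ∈ P(X)`. If `f ∈ C(X)` can be
approximated by polynomials on every fiber of `g`, then, `g` being a closed map, each approximation
persists on a tube `g⁻¹(U)`; gluing finitely many of them with a partition of unity `ρᵢ ∘ g`
subordinate to the `Uᵢ` gives an element of `P(X)` uniformly close to `f`. Conversely, by the
Tietze extension theorem `P(X) = C(X)` passes to every closed subset of `X`, in particular to the
fibers. -/

section FiberwiseApproximation

variable {X Y : Type*} [TopologicalSpace X] [CompactSpace X] [TopologicalSpace Y]

theorem ContinuousMap.exists_isOpen_preimage_subset [T2Space Y] (g : C(X, Y)) {V : Set X}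
    (hV : IsOpen V) {y : Y} (hy : g ⁻¹' {y} ⊆ V) : ∃ U, IsOpen U ∧ y ∈ U ∧ g ⁻¹' U ⊆ V := by
  have h := g.continuous.isClosedMap.eventually_nhds_fiber (p := (· ∈ V)) y
    fun x hx => hV.mem_nhds (hy hx)
  obtain ⟨U, hUV, hU, hyU⟩ := eventually_nhds_iff.1 h
  exact ⟨U, hU, hyU, fun x hx => hUV (g x) hx x rfl⟩

theorem ContinuousMap.dist_sum_partitionOfUnity_mul_le {𝕜 ι : Type*} [RCLike 𝕜] [Fintype ι]
    (ρ : PartitionOfUnity ι Y) (g : C(X, Y)) (f : C(X, 𝕜)) (a : ι → C(X, 𝕜)) {ε : ℝ}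
    (hε : 0 ≤ ε) (h : ∀ i x, ρ i (g x) ≠ 0 → ‖f x - a i x‖ ≤ ε) :
    dist f (∑ i, (((RCLike.ofRealCLM : ℝ →L[ℝ] 𝕜) : C(ℝ, 𝕜)).comp (ρ i)).comp g * a i) ≤ ε := by
  refine (ContinuousMap.dist_le hε).2 fun x => ?_
  have hmem := ρ.finsum_smul_mem_convex (Set.mem_univ (g x)) (g := fun i _ => a i x)
    (t := Metric.closedBall (f x) ε) (fun i hi => by simpa [dist_eq_norm'] using h i x hi)
    (convex_closedBall _ _)
  simpa [finsum_eq_sum_of_fintype, RCLike.real_smul_eq_coe_mul, dist_comm] using hmem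

theorem Subalgebra.eq_top_of_forall_fiber_approx {𝕜 : Type*} [RCLike 𝕜] [CompactSpace Y]
    [T2Space Y] (A : Subalgebra 𝕜 C(X, 𝕜))
    (hA : IsClosed (A : Set C(X, 𝕜))) (g : C(X, Y)) (hgA : ∀ χ : C(Y, 𝕜), χ.comp g ∈ A)
    (hfib : ∀ (f : C(X, 𝕜)) (y : Y) (ε : ℝ), 0 < ε →
      ∃ a ∈ A, ∀ x, g x = y → ‖f x - a x‖ < ε) :
    A = ⊤ := by
  refine eq_top_iff.2 fun f _ => ?_
  rw [← SetLike.mem_coe, ← hA.closure_eq, Metric.mem_closure_iff]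
  intro ε hε
  have hloc : ∀ y, ∃ a ∈ A, ∃ U, IsOpen U ∧ y ∈ U ∧ ∀ x, g x ∈ U → ‖f x - a x‖ < ε / 2 := by
    intro y
    obtain ⟨a, ha, hfa⟩ := hfib f y (ε / 2) (half_pos hε)
    have hV : IsOpen {x | ‖f x - a x‖ < ε / 2} := isOpen_lt (by fun_prop) continuous_const
    obtain ⟨U, hU, hyU, hUV⟩ := g.exists_isOpen_preimage_subset hV hfa
    exact ⟨a, ha, U, hU, hyU, fun x hx => hUV hx⟩
  choose a ha U hU hyU hUa using hloc
  obtain ⟨t, ht⟩ := isCompact_univ.elim_finite_subcover U hU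
    fun y _ => Set.mem_iUnion.2 ⟨y, hyU y⟩
  obtain ⟨ρ, hρ⟩ := PartitionOfUnity.exists_isSubordinate isClosed_univ (fun i : t => U i)
    (fun i => hU i) fun y hy => by
      obtain ⟨i, hi, hyi⟩ := Set.mem_iUnion₂.1 (ht hy)
      exact Set.mem_iUnion.2 ⟨⟨i, hi⟩, hyi⟩
  have hclose : ∀ (i : t) x, ρ i (g x) ≠ 0 → ‖f x - a i x‖ ≤ ε / 2 := fun i x hi =>
    (hUa i x (hρ i (subset_tsupport _ hi))).le
  have hdist := ContinuousMap.dist_sum_partitionOfUnity_mul_le ρ g f (fun i => a i)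
    (half_pos hε).le hclose
  refine ⟨_, ?_, hdist.trans_lt (half_lt_self hε)⟩
  exact A.sum_mem fun i _ => A.mul_mem (hgA _) (ha i)

end FiberwiseApproximation

section PolynomialAlgebra

variable {n : ℕ}

noncomputable def polySubalgebra (X : Set (Fin n → ℂ)) [CompactSpace X] : Subalgebra ℂ C(X, ℂ) :=
  (aeval fun i => (ContinuousMap.eval i).restrict X).range.topologicalClosure

theorem aeval_restrict_eval_apply (X : Set (Fin n → ℂ)) (p : MvPolynomial (Fin n) ℂ) (x : X) :
    aeval (fun i => (ContinuousMap.eval i).restrict X) p x = eval (x : Fin n → ℂ) p := by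
  induction p using MvPolynomial.induction_on <;> simp_all

theorem isClosed_polySubalgebra (X : Set (Fin n → ℂ)) [CompactSpace X] :
    IsClosed (polySubalgebra X : Set C(X, ℂ)) :=
  Subalgebra.isClosed_topologicalClosure _

theorem aeval_restrict_eval_mem_polySubalgebra (X : Set (Fin n → ℂ)) [CompactSpace X]
    (p : MvPolynomial (Fin n) ℂ) :
    aeval (fun i => (ContinuousMap.eval i).restrict X) p ∈ polySubalgebra X :=
  Subalgebra.le_topologicalClosure _ ⟨p, rfl⟩

theorem polyAlg_eq_polySubalgebra (X : Set (Fin n → ℂ)) [CompactSpace X] :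
    polyAlg n X = polySubalgebra X := by
  refine congrArg closure (Set.ext fun f => ⟨?_, ?_⟩)
  · rintro ⟨p, hp⟩
    exact ⟨p, ContinuousMap.ext fun x => (aeval_restrict_eval_apply X p x).trans (hp x).symm⟩
  · rintro ⟨p, rfl⟩
    exact ⟨p, aeval_restrict_eval_apply X p⟩

theorem comp_inclusion_mem_polyAlg {X Y : Set (Fin n → ℂ)} (hYX : Y ⊆ X) {f : C(X, ℂ)}
    (hf : f ∈ polyAlg n X) : f.comp (ContinuousMap.inclusion hYX) ∈ polyAlg n Y := by
  refine map_mem_closure (f := fun q : C(X, ℂ) => q.comp (ContinuousMap.inclusion hYX))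
    (ContinuousMap.continuous_precomp _) hf ?_
  rintro _ ⟨p, hp⟩
  exact ⟨p, fun y => hp _⟩

theorem polyAlg_eq_univ_of_subset {X Y : Set (Fin n → ℂ)} (hY : IsClosed Y) (hYX : Y ⊆ X)
    (hX : polyAlg n X = Set.univ) : polyAlg n Y = Set.univ := by
  refine Set.eq_univ_of_forall fun f => ?_
  obtain ⟨F, rfl⟩ := f.exists_restrict_eq hY
  exact comp_inclusion_mem_polyAlg hYX (hX ▸ Set.mem_univ (F.restrict X))

theorem exists_mvPolynomial_approx_of_polyAlg_eq_univ {X Y : Set (Fin n → ℂ)}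
    (hY : IsCompact Y) (hYX : Y ⊆ X) (hP : polyAlg n Y = Set.univ) (f : C(X, ℂ)) {ε : ℝ}
    (hε : 0 < ε) : ∃ p : MvPolynomial (Fin n) ℂ, ∀ x : X, (x : Fin n → ℂ) ∈ Y →
      ‖f x - eval (x : Fin n → ℂ) p‖ < ε := by
  have : CompactSpace Y := isCompact_iff_compactSpace.mp hY
  have hf : f.comp (ContinuousMap.inclusion hYX) ∈ polyAlg n Y := hP ▸ Set.mem_univ _
  obtain ⟨q, ⟨p, hqp⟩, hq⟩ := Metric.mem_closure_iff.1 hf ε hε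
  refine ⟨p, fun x hx => ?_⟩
  calc ‖f x - eval (x : Fin n → ℂ) p‖ = dist (f.comp (ContinuousMap.inclusion hYX) ⟨x, hx⟩)
        (q ⟨x, hx⟩) := by rw [hqp, dist_eq_norm]; rfl
    _ ≤ dist (f.comp (ContinuousMap.inclusion hYX)) q := ContinuousMap.dist_apply_le_dist _
    _ < ε := hq

theorem comp_mem_of_mem_polyAlg1 {X : Type*} [TopologicalSpace X] (A : Subalgebra ℂ C(X, ℂ))
    (hA : IsClosed (A : Set C(X, ℂ))) {g : C(X, ℂ)} (hg : g ∈ A) {χ : C(Set.range g, ℂ)}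
    (hχ : χ ∈ polyAlg1 (Set.range g)) :
    χ.comp ⟨Set.rangeFactorization g, g.continuous.rangeFactorization⟩ ∈ A := by
  rw [← SetLike.mem_coe, ← hA.closure_eq]
  refine map_mem_closure (f := fun q : C(Set.range g, ℂ) => q.comp
    ⟨Set.rangeFactorization g, g.continuous.rangeFactorization⟩)
    (ContinuousMap.continuous_precomp _) hχ ?_
  rintro q ⟨p, hp⟩
  have hpg : Polynomial.aeval g p ∈ A :=
    Algebra.adjoin_le (Set.singleton_subset_iff.2 hg)
      (Algebra.adjoin_singleton_eq_range_aeval ℂ g ▸ ⟨p, rfl⟩)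
  show q.comp _ ∈ A
  convert hpg using 1
  ext x
  simp [hp, Polynomial.aeval_continuousMap_apply, Set.rangeFactorization]

end PolynomialAlgebra

theorem stmt1_general (n : ℕ) (X : Set (Fin n → ℂ)) (hX : IsCompact X)
    (g : C(X, ℂ)) (hg : g ∈ polyAlg n X)
    (hgX : polyAlg1 (Set.range g) = Set.univ) :
    polyAlg n X = Set.univ ↔
      ∀ t : ℂ, polyAlg n (Subtype.val '' (g ⁻¹' {t})) = Set.univ := by
  have : CompactSpace X := isCompact_iff_compactSpace.mp hX
  have : CompactSpace (Set.range g) := isCompact_iff_compactSpace.mp (isCompact_range g.continuous)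
  have hfiber : ∀ t : ℂ, IsCompact (Subtype.val '' (g ⁻¹' {t})) := fun t =>
    (isClosed_singleton.preimage g.continuous).isCompact.image continuous_subtype_val
  refine ⟨fun hP t => polyAlg_eq_univ_of_subset (hfiber t).isClosed
    (Subtype.coe_image_subset X _) hP, fun hfib => ?_⟩
  rw [polyAlg_eq_polySubalgebra] at hg ⊢
  suffices polySubalgebra X = ⊤ by rw [this, Algebra.coe_top]
  refine (polySubalgebra X).eq_top_of_forall_fiber_approx (isClosed_polySubalgebra X)
    ⟨Set.rangeFactorization g, g.continuous.rangeFactorization⟩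
    (fun χ => comp_mem_of_mem_polyAlg1 _ (isClosed_polySubalgebra X) hg (hgX ▸ Set.mem_univ χ))
    fun f y ε hε => ?_
  obtain ⟨p, hp⟩ := exists_mvPolynomial_approx_of_polyAlg_eq_univ (hfiber y)
    (Subtype.coe_image_subset X _) (hfib y) f hε
  refine ⟨_, aeval_restrict_eval_mem_polySubalgebra X p, fun x hx => ?_⟩
  rw [aeval_restrict_eval_apply]
  exact hp x ⟨x, congrArg Subtype.val hx, rfl⟩

theorem stmt1 (n : ℕ) (X : Set (Fin n → ℂ)) (hX : IsCompact X)
    (g : C(X, ℂ)) (hg : g ∈ polyAlg n X)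
    (hgX : polyAlg1 (Set.range g) = Set.univ)
    (hpc : IsPolyConvex n X) :
    polyAlg n X = Set.univ ↔
      ∀ t : ℂ, polyAlg n (Subtype.val '' (g ⁻¹' {t})) = Set.univ :=
  stmt1_general n X hX g hg hgX
end

section
/- Let X be a compact subset of ℂⁿ, X₀ a closed subset of X, and f ∈ C(X) a complex-valued function with X₀ = f⁻¹(0), such that P(f(X)) = C(f(X)) and every fiber f⁻¹(t) for t ∈ ℂ \ {0} is polynomially convex. Then the graph Γ_f = {(x, f(x)) : x ∈ X} ⊂ ℂ^{n+1} satisfies Γ̂_f = (X̂₀ × {0}) ∪ Γ_f. -/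
open MvPolynomial

/-!
If `(w, t)` lies in the hull of the graph, testing against the polynomials `p(x) q(xₙ₊₁)` gives
`‖p(w)‖ ‖q(t)‖ ≤ sup_X ‖p‖ ‖q ∘ f‖`. Since `P(f(X)) = C(f(X))`, the same holds with `q` replaced
by any continuous function on `ℂ`. Taking `q` close to `1 / (y - t)` shows that `f(X)` is
polynomially convex, so `t ∈ f(X)`; taking an Urysohn bump at `t` localizes the sup to the fiber
`f⁻¹(t)`, so `w` lies in the hull of that fiber. For `t ≠ 0` the fiber is polynomially convex, and
for `t = 0` it is `X₀`. Conversely, `X̂₀ × {0}` is contained in the hull of `X₀ × {0} ⊆ Γ_f`.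
-/

namespace MvPolynomial

section ToContinuousMapOn

variable {σ : Type*} (S : Set (σ → ℂ))

noncomputable def toContinuousMapOn (p : MvPolynomial σ ℂ) : C(S, ℂ) :=
  ⟨fun x => eval (x : σ → ℂ) p, (continuous_eval p).comp continuous_subtype_val⟩

@[simp]
lemma toContinuousMapOn_one : (1 : MvPolynomial σ ℂ).toContinuousMapOn S = 1 := by
  ext
  simp [toContinuousMapOn]

end ToContinuousMapOn

lemma eval_snoc_eq_eval_aeval {n : ℕ} (w : Fin n → ℂ) (c : ℂ)
    (P : MvPolynomial (Fin (n + 1)) ℂ) :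
    eval (Fin.snoc w c) P = eval w (aeval (Fin.snoc X (C c)) P) := by
  change aeval (Fin.snoc w c) P = aeval w (aeval (Fin.snoc X (C c)) P)
  rw [← AlgHom.comp_apply, comp_aeval]
  congr 2
  funext i
  refine Fin.lastCases ?_ (fun i => ?_) i <;> simp

lemma eval_snoc_rename_mul_aeval {n : ℕ} (x : Fin n → ℂ) (s : ℂ) (p : MvPolynomial (Fin n) ℂ)
    (q : Polynomial ℂ) :
    eval (Fin.snoc x s) (rename Fin.castSucc p * Polynomial.aeval (X (Fin.last n)) q) =
      eval x p * q.eval s := by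
  have hx : Fin.snoc x s ∘ Fin.castSucc = x := by funext i; simp
  rw [map_mul, eval_rename, hx]
  change _ * aeval (Fin.snoc x s) (Polynomial.aeval (X (Fin.last n)) q) = _
  rw [← Polynomial.aeval_algHom_apply, aeval_X, Fin.snoc_last,
    Polynomial.coe_aeval_eq_eval]

end MvPolynomial

section Hull

variable {m : ℕ}

lemma norm_eval_le_sSup_image {S : Set (Fin m → ℂ)} (hS : IsCompact S)
    (p : MvPolynomial (Fin m) ℂ) {x : Fin m → ℂ} (hx : x ∈ S) :
    ‖eval x p‖ ≤ sSup ((fun x => ‖eval x p‖) '' S) :=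
  le_csSup (hS.image (continuous_eval p).norm).bddAbove ⟨x, hx, rfl⟩

lemma subset_polyHull_s2 {S : Set (Fin m → ℂ)} (hS : IsCompact S) : S ⊆ polyHull m S :=
  fun _ hx p => norm_eval_le_sSup_image hS p hx

lemma polyHull_mono_s2 {A B : Set (Fin m → ℂ)} (hB : IsCompact B) (hAB : A ⊆ B) :
    polyHull m A ⊆ polyHull m B := by
  intro z hz p
  refine (hz p).trans ?_
  rcases A.eq_empty_or_nonempty with rfl | hA
  · rw [Set.image_empty, Real.sSup_empty]
    exact Real.sSup_nonneg (by rintro _ ⟨x, -, rfl⟩; positivity)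
  · exact csSup_le_csSup (hB.image (continuous_eval p).norm).bddAbove (hA.image _)
      (Set.image_mono hAB)

lemma snoc_mem_polyHull_image_snoc {n : ℕ} {S : Set (Fin n → ℂ)} {w : Fin n → ℂ}
    (hw : w ∈ polyHull n S) (c : ℂ) :
    Fin.snoc w c ∈ polyHull (n + 1) ((fun x => Fin.snoc x c) '' S) := by
  intro P
  simpa only [Set.image_image, eval_snoc_eq_eval_aeval] using hw _

end Hull

section PolynomialApproximation

lemma exists_polynomial_norm_sub_lt {Y : Set ℂ} [CompactSpace Y] (hY : polyAlg1 Y = Set.univ)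
    (g : C(Y, ℂ)) {ε : ℝ} (hε : 0 < ε) :
    ∃ q : Polynomial ℂ, ∀ y : Y, ‖q.eval (y : ℂ) - g y‖ < ε := by
  have hg : g ∈ polyAlg1 Y := hY ▸ Set.mem_univ g
  obtain ⟨g', ⟨q, hq⟩, hdist⟩ := Metric.mem_closure_iff.mp hg ε hε
  refine ⟨q, fun y => ?_⟩
  rw [← hq y, ← dist_eq_norm, dist_comm]
  exact (ContinuousMap.dist_apply_le_dist y).trans_lt hdist

lemma exists_polynomial_eval_eq_one_of_notMem {Y : Set ℂ} (hYc : IsCompact Y)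
    (hY : polyAlg1 Y = Set.univ) {t : ℂ} (ht : t ∉ Y) :
    ∃ r : Polynomial ℂ, r.eval t = 1 ∧ ∀ y ∈ Y, ‖r.eval y‖ ≤ 1 / 2 := by
  have : CompactSpace Y := isCompact_iff_compactSpace.mp hYc
  obtain ⟨D, hD0, hD⟩ := (hYc.image (continuous_sub_right t)).isBounded.exists_pos_norm_le
  have hne : ∀ y : Y, (y : ℂ) - t ≠ 0 := fun y => sub_ne_zero.mpr fun h => ht (h ▸ y.2)
  let g : C(Y, ℂ) := ⟨fun y => ((y : ℂ) - t)⁻¹, by fun_prop (disch := exact hne)⟩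
  obtain ⟨q, hq⟩ := exists_polynomial_norm_sub_lt hY g (by positivity : (0 : ℝ) < 1 / (2 * D))
  refine ⟨1 - (Polynomial.X - Polynomial.C t) * q, by simp, fun y hy => ?_⟩
  have hr : (1 - (Polynomial.X - Polynomial.C t) * q).eval y =
      -((y - t) * (q.eval y - g ⟨y, hy⟩)) := by
    simp [g, mul_sub, mul_inv_cancel₀ (hne ⟨y, hy⟩)]
  calc ‖(1 - (Polynomial.X - Polynomial.C t) * q).eval y‖
      = ‖y - t‖ * ‖q.eval y - g ⟨y, hy⟩‖ := by rw [hr, norm_neg, norm_mul]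
    _ ≤ D * (1 / (2 * D)) := mul_le_mul (hD _ ⟨y, hy, rfl⟩) (hq ⟨y, hy⟩).le (norm_nonneg _) hD0.le
    _ = 1 / 2 := by field_simp

end PolynomialApproximation

section RangeOfContinuousMap

variable {X : Type*} [TopologicalSpace X] [CompactSpace X] (f : C(X, ℂ))

lemma mem_range_of_forall_norm_eval_le (hf : polyAlg1 (Set.range f) = Set.univ) {t : ℂ}
    (h : ∀ q : Polynomial ℂ, ‖q.eval t‖ ≤ ‖q.toContinuousMap.comp f‖) : t ∈ Set.range f := by
  by_contra ht
  obtain ⟨r, hrt, hr⟩ :=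
    exists_polynomial_eval_eq_one_of_notMem (isCompact_range f.continuous) hf ht
  have hle : ‖r.toContinuousMap.comp f‖ ≤ 1 / 2 :=
    (ContinuousMap.norm_le _ (by norm_num)).mpr fun x => hr _ ⟨x, rfl⟩
  have := h r
  rw [hrt, norm_one] at this
  linarith

lemma norm_mul_le_of_forall_polynomial (hf : polyAlg1 (Set.range f) = Set.univ) (u : C(X, ℂ))
    {a t : ℂ} (ht : t ∈ Set.range f)
    (h : ∀ q : Polynomial ℂ, ‖a‖ * ‖q.eval t‖ ≤ ‖u * q.toContinuousMap.comp f‖) (g : C(ℂ, ℂ)) :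
    ‖a‖ * ‖g t‖ ≤ ‖u * g.comp f‖ := by
  set Y := Set.range f
  have : CompactSpace Y := isCompact_iff_compactSpace.mp (isCompact_range f.continuous)
  let f' : C(X, Y) := ⟨Set.rangeFactorization f, f.continuous.subtype_mk _⟩
  have hclosed : IsClosed {G : C(Y, ℂ) | ‖a‖ * ‖G ⟨t, ht⟩‖ ≤ ‖u * G.comp f'‖} :=
    isClosed_le (continuous_const.mul (continuous_eval_const _).norm)
      (continuous_const.mul (ContinuousMap.continuous_precomp f')).norm
  have hpoly : polyAlg1 Y ⊆ {G : C(Y, ℂ) | ‖a‖ * ‖G ⟨t, ht⟩‖ ≤ ‖u * G.comp f'‖} := by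
    refine closure_minimal ?_ hclosed
    rintro G ⟨q, hq⟩
    have hcomp : G.comp f' = q.toContinuousMap.comp f := by ext x; exact hq _
    show ‖a‖ * ‖G ⟨t, ht⟩‖ ≤ ‖u * G.comp f'‖
    rw [hq, hcomp]
    exact h q
  exact hpoly (hf ▸ Set.mem_univ (g.restrict Y))

lemma norm_le_sSup_image_fiber (hf : polyAlg1 (Set.range f) = Set.univ) (u : C(X, ℂ))
    {a t : ℂ} (ht : t ∈ Set.range f)
    (h : ∀ q : Polynomial ℂ, ‖a‖ * ‖q.eval t‖ ≤ ‖u * q.toContinuousMap.comp f‖) :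
    ‖a‖ ≤ sSup ((fun x => ‖u x‖) '' (f ⁻¹' {t})) := by
  set B := sSup ((fun x => ‖u x‖) '' (f ⁻¹' {t}))
  have hB : ∀ x, f x = t → ‖u x‖ ≤ B := fun x hx =>
    le_csSup ⟨‖u‖, by rintro _ ⟨y, -, rfl⟩; exact u.norm_coe_le_norm y⟩ ⟨x, hx, rfl⟩
  have hB0 : 0 ≤ B := Real.sSup_nonneg (by rintro _ ⟨x, -, rfl⟩; positivity)
  refine le_of_forall_pos_le_add fun ε hε => ?_
  set K := f '' {x | B + ε ≤ ‖u x‖}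
  have hK : IsClosed K :=
    ((isClosed_le continuous_const u.continuous.norm).isCompact.image f.continuous).isClosed
  have htK : t ∉ K := by
    rintro ⟨x, hx, hxt⟩
    linarith [hB x hxt, show B + ε ≤ ‖u x‖ from hx]
  obtain ⟨G, hG0, hG1, hG⟩ := exists_continuous_zero_one_of_isClosed hK isClosed_singleton
    (Set.disjoint_singleton_right.mpr htK)
  have := norm_mul_le_of_forall_polynomial f hf u ht h ⟨fun z => (G z : ℂ), by fun_prop⟩
  refine le_trans (by simpa [hG1 rfl] using this)
    ((ContinuousMap.norm_le _ (by positivity)).mpr fun x => ?_)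
  simp only [ContinuousMap.mul_apply, ContinuousMap.comp_apply, ContinuousMap.coe_mk, norm_mul,
    Complex.norm_real, Real.norm_of_nonneg (hG _).1]
  by_cases hx : B + ε ≤ ‖u x‖
  · rw [hG0 ⟨x, hx, rfl⟩]
    simp only [Pi.zero_apply, mul_zero]
    positivity
  · exact (mul_le_of_le_one_right (norm_nonneg _) (hG _).2).trans (not_le.mp hx).le

end RangeOfContinuousMap

section Graph

variable {n : ℕ} {S : Set (Fin n → ℂ)} [CompactSpace S] (f : C(S, ℂ))

lemma isCompact_graph :
    IsCompact {z : Fin (n + 1) → ℂ | ∃ x : S, z = Fin.snoc (x : Fin n → ℂ) (f x)} := by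
  convert isCompact_range (continuous_subtype_val.finSnoc (A := fun _ => ℂ) f.continuous) using 1
  ext z
  simp [eq_comm]

lemma norm_eval_mul_norm_eval_le_of_snoc_mem_polyHull {w : Fin n → ℂ} {t : ℂ}
    (hz : Fin.snoc w t ∈ polyHull (n + 1) {z | ∃ x : S, z = Fin.snoc (x : Fin n → ℂ) (f x)})
    (p : MvPolynomial (Fin n) ℂ) (q : Polynomial ℂ) :
    ‖eval w p‖ * ‖q.eval t‖ ≤ ‖p.toContinuousMapOn S * q.toContinuousMap.comp f‖ := by
  have h := hz (rename Fin.castSucc p * Polynomial.aeval (X (Fin.last n)) q)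
  rw [eval_snoc_rename_mul_aeval, norm_mul] at h
  refine h.trans (Real.sSup_le ?_ (norm_nonneg _))
  rintro _ ⟨_, ⟨x, rfl⟩, rfl⟩
  dsimp only
  rw [eval_snoc_rename_mul_aeval]
  exact (p.toContinuousMapOn S * q.toContinuousMap.comp f).norm_coe_le_norm x

end Graph

theorem stmt2_general (n : ℕ) (X : Set (Fin n → ℂ)) (hX : IsCompact X)
    (X₀ : Set (Fin n → ℂ))
    (f : C(X, ℂ))
    (hfib0 : X₀ = Subtype.val '' (f ⁻¹' {0}))
    (hfX : polyAlg1 (Set.range f) = Set.univ)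
    (hfibers : ∀ t : ℂ, t ≠ 0 → IsPolyConvex n (Subtype.val '' (f ⁻¹' {t}))) :
    polyHull (n + 1) {z : Fin (n + 1) → ℂ | ∃ x : X, z = Fin.snoc (x : Fin n → ℂ) (f x)} =
      {z : Fin (n + 1) → ℂ | ∃ w ∈ polyHull n X₀, z = Fin.snoc w 0} ∪
        {z : Fin (n + 1) → ℂ | ∃ x : X, z = Fin.snoc (x : Fin n → ℂ) (f x)} := by
  have : CompactSpace X := isCompact_iff_compactSpace.mp hX
  refine subset_antisymm (fun z hz => ?_)
    (Set.union_subset ?_ (subset_polyHull_s2 (isCompact_graph f)))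
  · obtain ⟨w, t, rfl⟩ : ∃ w t, z = Fin.snoc w t :=
      ⟨Fin.init z, z (Fin.last n), (Fin.snoc_init_self z).symm⟩
    have key := norm_eval_mul_norm_eval_le_of_snoc_mem_polyHull f hz
    have ht : t ∈ Set.range f := mem_range_of_forall_norm_eval_le f hfX fun q => by
      simpa using key 1 q
    have hw : w ∈ polyHull n (Subtype.val '' (f ⁻¹' {t})) := fun p => by
      rw [Set.image_image]
      exact norm_le_sSup_image_fiber f hfX _ ht (key p)
    rcases eq_or_ne t 0 with rfl | ht0
    · exact Or.inl ⟨w, hfib0 ▸ hw, rfl⟩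
    · rw [hfibers t ht0] at hw
      obtain ⟨x, hx, rfl⟩ := hw
      exact Or.inr ⟨x, by rw [show f x = t from hx]⟩
  · rintro _ ⟨w, hw, rfl⟩
    refine polyHull_mono_s2 (isCompact_graph f) ?_ (snoc_mem_polyHull_image_snoc hw 0)
    rintro _ ⟨_, hx, rfl⟩
    rw [hfib0] at hx
    obtain ⟨x, hx, rfl⟩ := hx
    exact ⟨x, by rw [show f x = 0 from hx]⟩

theorem stmt2 (n : ℕ) (X : Set (Fin n → ℂ)) (hX : IsCompact X)
    (X₀ : Set (Fin n → ℂ)) (hX₀closed : IsClosed X₀) (hX₀sub : X₀ ⊆ X)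
    (f : C(X, ℂ))
    (hfib0 : X₀ = Subtype.val '' (f ⁻¹' {0}))
    (hfX : polyAlg1 (Set.range f) = Set.univ)
    (hfibers : ∀ t : ℂ, t ≠ 0 → IsPolyConvex n (Subtype.val '' (f ⁻¹' {t}))) :
    polyHull (n + 1) {z : Fin (n + 1) → ℂ | ∃ x : X, z = Fin.snoc (x : Fin n → ℂ) (f x)} =
      {z : Fin (n + 1) → ℂ | ∃ w ∈ polyHull n X₀, z = Fin.snoc w 0} ∪
        {z : Fin (n + 1) → ℂ | ∃ x : X, z = Fin.snoc (x : Fin n → ℂ) (f x)} :=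
  stmt2_general n X hX X₀ f hfib0 hfX hfibers
end

section
/- Let X be a compact subset of ℂⁿ, X₀ a closed subset of X, and f ∈ C(X) with X₀ = f⁻¹(0). Suppose P(f(X)) = C(f(X)) and P(f⁻¹(t)) = C(f⁻¹(t)) for all t ∈ ℂ \ {0}. Then P(Γ_f) = {g ∈ C(Γ_f) : g restricted to X₀ × {0} belongs to P(X₀ × {0})}, where Γ_f is the graph of f. -/
open MvPolynomial

/-!
Work fibrewise over the last coordinate `t` of the graph. On each fibre `g` is a uniform limit of
polynomials: over `t = 0` the fibre is `X₀ × {0}`, and over `t ≠ 0` it is `f⁻¹(t) × {t}`, where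
`P = C`. By compactness each such approximation persists over a neighbourhood of `t`. A partition
of unity on `f(X)` subordinate to finitely many of these neighbourhoods glues the local
polynomials with an error still below `ε`, and since `P(f(X)) = C(f(X))` the partition functions,
composed with the last coordinate, lie in the closed algebra `P(Γ)`.
-/

open Set

@[fun_prop]
lemma continuous_subtype_val_apply {ι : Type*} {E : ι → Type*} [∀ i, TopologicalSpace (E i)]
    {K : Set (∀ i, E i)} (i : ι) : Continuous fun z : K => (z : ∀ i, E i) i :=
  (continuous_apply i).comp continuous_subtype_val

section PolyAlg

variable {m : ℕ} {K : Set (Fin m → ℂ)}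

noncomputable def polyEval (m : ℕ) (K : Set (Fin m → ℂ)) :
    MvPolynomial (Fin m) ℂ →ₐ[ℂ] C(K, ℂ) :=
  aeval fun i => ⟨fun x => (x : Fin m → ℂ) i, by fun_prop⟩

lemma polyEval_apply (p : MvPolynomial (Fin m) ℂ) (x : K) :
    polyEval m K p x = eval (x : Fin m → ℂ) p := by
  induction p using MvPolynomial.induction_on with
  | C a => simp [polyEval]
  | add p q hp hq => simp_all
  | mul_X p i hp => simp_all [polyEval]

lemma polyAlg_eq_topologicalClosure [CompactSpace K] :
    polyAlg m K = ((polyEval m K).range.topologicalClosure : Set C(K, ℂ)) := by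
  rw [Subalgebra.topologicalClosure_coe, polyAlg]
  congr 1
  ext f
  simp [polyEval_apply, ContinuousMap.ext_iff, eq_comm]

lemma exists_forall_norm_sub_lt_of_mem_polyAlg [CompactSpace K] {g : C(K, ℂ)}
    (hg : g ∈ polyAlg m K) {ε : ℝ} (hε : 0 < ε) :
    ∃ p : MvPolynomial (Fin m) ℂ, ∀ x : K, ‖g x - eval (x : Fin m → ℂ) p‖ < ε := by
  obtain ⟨u, ⟨p, hp⟩, hgu⟩ := Metric.mem_closure_iff.1 hg ε hε
  exact ⟨p, fun x => by simpa [← hp x, dist_eq_norm] using (ContinuousMap.dist_lt_iff hε).1 hgu x⟩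

lemma mem_polyAlg_of_forall_norm_sub_lt [CompactSpace K] {g : C(K, ℂ)}
    (h : ∀ ε > 0, ∃ u ∈ polyAlg m K, ∀ x : K, ‖g x - u x‖ < ε) : g ∈ polyAlg m K := by
  have hclosed : IsClosed (polyAlg m K) := isClosed_closure
  rw [← hclosed.closure_eq, Metric.mem_closure_iff]
  intro ε hε
  obtain ⟨u, hu, hgu⟩ := h ε hε
  exact ⟨u, hu, (ContinuousMap.dist_lt_iff hε).2 fun x => by simpa [dist_eq_norm] using hgu x⟩

lemma comp_inclusion_mem_polyAlg_s3 {L : Set (Fin m → ℂ)} (hLK : L ⊆ K) {g : C(K, ℂ)}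
    (hg : g ∈ polyAlg m K) :
    g.comp ⟨Set.inclusion hLK, continuous_inclusion hLK⟩ ∈ polyAlg m L :=
  map_mem_closure (f := fun u : C(K, ℂ) => u.comp _) (ContinuousMap.continuous_precomp _) hg
    fun _ ⟨p, hp⟩ => ⟨p, fun x => hp (Set.inclusion hLK x)⟩

lemma eval_aeval_X (z : Fin m → ℂ) (i : Fin m) (q : Polynomial ℂ) :
    eval z (Polynomial.aeval (X i) q) = q.eval (z i) := by
  rw [← aeval_eq_eval, ← Polynomial.aeval_algHom_apply]
  simp

lemma comp_coord_mem_polyAlg {Y : Set ℂ} (hY : polyAlg1 Y = univ) {i : Fin m}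
    (hKY : ∀ z ∈ K, z i ∈ Y) (φ : C(ℂ, ℂ)) :
    (⟨fun z : K => φ ((z : Fin m → ℂ) i), by fun_prop⟩ : C(K, ℂ)) ∈ polyAlg m K := by
  let πY : C(K, Y) := ⟨fun z => ⟨(z : Fin m → ℂ) i, hKY z z.2⟩, by fun_prop⟩
  have hφ : φ.restrict Y ∈ polyAlg1 Y := hY ▸ mem_univ _
  exact map_mem_closure (f := fun u : C(Y, ℂ) => u.comp πY)
    (ContinuousMap.continuous_precomp πY) hφ
    fun _ ⟨q, hq⟩ => ⟨Polynomial.aeval (X i) q, fun z => by simp [πY, hq, eval_aeval_X]⟩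

end PolyAlg

theorem exists_isOpen_mem_forall_lt_of_fiber {K T : Type*} [TopologicalSpace K] [CompactSpace K]
    [TopologicalSpace T] [T2Space T] {π : K → T} (hπ : Continuous π) {h : K → ℝ}
    (hh : Continuous h) {t : T} {ε : ℝ} (ht : ∀ z, π z = t → h z < ε) :
    ∃ U, IsOpen U ∧ t ∈ U ∧ ∀ z, π z ∈ U → h z < ε := by
  refine ⟨(π '' {z | ε ≤ h z})ᶜ,
    ((isClosed_le continuous_const hh).isCompact.image hπ).isClosed.isOpen_compl, ?_, ?_⟩
  · rintro ⟨z, hz, rfl⟩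
    exact hz.not_gt (ht z rfl)
  · intro z hz
    by_contra! hεz
    exact hz ⟨z, hεz, rfl⟩

theorem mem_polyAlg_of_forall_fiber {m : ℕ} {K : Set (Fin m → ℂ)} [CompactSpace K] (i : Fin m)
    {Y : Set ℂ} (hYc : IsCompact Y) (hY : polyAlg1 Y = univ) (hKY : ∀ z ∈ K, z i ∈ Y)
    (g : C(K, ℂ))
    (hfib : ∀ t ∈ Y, ∀ ε > 0, ∃ p : MvPolynomial (Fin m) ℂ,
      ∀ z : K, (z : Fin m → ℂ) i = t → ‖g z - eval (z : Fin m → ℂ) p‖ < ε) :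
    g ∈ polyAlg m K := by
  refine mem_polyAlg_of_forall_norm_sub_lt fun ε hε => ?_
  have hlocal : ∀ t : Y, ∃ (p : MvPolynomial (Fin m) ℂ) (U : Set ℂ), IsOpen U ∧ (t : ℂ) ∈ U ∧
      ∀ z : K, (z : Fin m → ℂ) i ∈ U → ‖g z - eval (z : Fin m → ℂ) p‖ < ε := by
    intro t
    obtain ⟨p, hp⟩ := hfib t t.2 ε hε
    exact ⟨p, exists_isOpen_mem_forall_lt_of_fiber (by fun_prop)
      (g.continuous.sub ((continuous_eval p).comp continuous_subtype_val)).norm hp⟩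
  choose p U hUo htU hU using hlocal
  obtain ⟨T, hT⟩ := hYc.elim_finite_subcover U hUo fun t ht => mem_iUnion.2 ⟨⟨t, ht⟩, htU _⟩
  obtain ⟨ρ, hρ⟩ := PartitionOfUnity.exists_isSubordinate hYc.isClosed (fun j : T => U j)
    (fun j => hUo j) (by simpa [Set.iUnion_subtype] using hT)
  refine ⟨∑ j : T, ⟨fun z : K => ((ρ j ((z : Fin m → ℂ) i) : ℝ) : ℂ), by fun_prop⟩ *
    polyEval m K (p j), ?_, fun z => ?_⟩
  · have hρK : ∀ j : T, (⟨fun z : K => ((ρ j ((z : Fin m → ℂ) i) : ℝ) : ℂ), by fun_prop⟩ :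
        C(K, ℂ)) ∈ (polyEval m K).range.topologicalClosure := fun j => by
      rw [← SetLike.mem_coe, ← polyAlg_eq_topologicalClosure]
      exact comp_coord_mem_polyAlg hY hKY ⟨fun s => (ρ j s : ℂ), by fun_prop⟩
    rw [polyAlg_eq_topologicalClosure]
    exact Subalgebra.sum_mem _ fun j _ =>
      Subalgebra.mul_mem _ (hρK j) (Subalgebra.le_topologicalClosure _ ⟨p j, rfl⟩)
  -- `∑ ρ_j(z_i) p_j(z)` is a convex combination of values `p_j(z)` with `ρ_j(z_i) ≠ 0`,
  -- all of which lie in the `ε`-ball around `g z`.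
  · have hmem := ρ.finsum_smul_mem_convex (hKY z z.2)
      (g := fun j _ => eval (z : Fin m → ℂ) (p j)) (t := Metric.ball (g z) ε)
      (fun j hj => by
        rw [Metric.mem_ball, dist_comm, dist_eq_norm]
        exact hU j z (hρ j (subset_tsupport _ hj)))
      (convex_ball _ _)
    rw [Metric.mem_ball, dist_comm, dist_eq_norm, finsum_eq_sum_of_fintype] at hmem
    simpa [polyEval_apply, Complex.real_smul] using hmem

theorem exists_forall_norm_sub_lt_on_slice {n : ℕ} {K : Set (Fin (n + 1) → ℂ)}
    {F : Set (Fin n → ℂ)} [CompactSpace F] (hF : polyAlg n F = univ) {t : ℂ}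
    (hFK : ∀ x ∈ F, (Fin.snoc x t : Fin (n + 1) → ℂ) ∈ K)
    (hKF : ∀ z ∈ K, z (Fin.last n) = t → Fin.init z ∈ F) (g : C(K, ℂ)) {ε : ℝ} (hε : 0 < ε) :
    ∃ p : MvPolynomial (Fin (n + 1)) ℂ, ∀ z : K, (z : Fin (n + 1) → ℂ) (Fin.last n) = t →
      ‖g z - eval (z : Fin (n + 1) → ℂ) p‖ < ε := by
  let u : C(F, ℂ) := ⟨fun x => g ⟨Fin.snoc (x : Fin n → ℂ) t, hFK x x.2⟩, by fun_prop⟩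
  obtain ⟨q, hq⟩ := exists_forall_norm_sub_lt_of_mem_polyAlg (hF ▸ mem_univ u) hε
  refine ⟨rename Fin.castSucc q, fun z hz => ?_⟩
  have hsnoc : Fin.snoc (Fin.init (z : Fin (n + 1) → ℂ)) t = (z : Fin (n + 1) → ℂ) :=
    hz ▸ Fin.snoc_init_self _
  have hzq := hq ⟨_, hKF z z.2 hz⟩
  simp only [u, ContinuousMap.coe_mk, hsnoc] at hzq
  rwa [eval_rename]

section SnocGraph

variable {n : ℕ} {X : Set (Fin n → ℂ)} (f : C(X, ℂ))

def snocGraph : Set (Fin (n + 1) → ℂ) := {z | ∃ x : X, z = Fin.snoc (x : Fin n → ℂ) (f x)}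

lemma isCompact_snocGraph [CompactSpace X] : IsCompact (snocGraph f) := by
  convert isCompact_range
    (f := fun x : X => (Fin.snoc (x : Fin n → ℂ) (f x) : Fin (n + 1) → ℂ)) (by fun_prop)
  ext z
  simp [snocGraph, eq_comm]

variable {f}

lemma last_mem_range_of_mem_snocGraph {z : Fin (n + 1) → ℂ} (hz : z ∈ snocGraph f) :
    z (Fin.last n) ∈ range f := by
  obtain ⟨x, rfl⟩ := hz
  exact ⟨x, by simp⟩

lemma init_mem_fiber_of_mem_snocGraph {z : Fin (n + 1) → ℂ} (hz : z ∈ snocGraph f) :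
    Fin.init z ∈ Subtype.val '' (f ⁻¹' {z (Fin.last n)}) := by
  obtain ⟨x, rfl⟩ := hz
  exact ⟨x, by simp⟩

lemma snoc_mem_snocGraph {t : ℂ} {x : Fin n → ℂ} (hx : x ∈ Subtype.val '' (f ⁻¹' {t})) :
    (Fin.snoc x t : Fin (n + 1) → ℂ) ∈ snocGraph f := by
  obtain ⟨x, hx, rfl⟩ := hx
  exact ⟨x, by rw [show f x = t from hx]⟩

end SnocGraph

theorem stmt3_general (n : ℕ) (X : Set (Fin n → ℂ)) (hX : IsCompact X)
    (X₀ : Set (Fin n → ℂ))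
    (f : C(X, ℂ))
    (hfib0 : X₀ = Subtype.val '' (f ⁻¹' {0}))
    (hfX : polyAlg1 (Set.range f) = Set.univ)
    (hfibers : ∀ t : ℂ, t ≠ 0 →
      polyAlg n (Subtype.val '' (f ⁻¹' {t})) = Set.univ)
    -- the graph of `f` and the set `X₀ × {0}` inside it
    (Γ E₀ : Set (Fin (n + 1) → ℂ))
    (hΓ : Γ = {z : Fin (n + 1) → ℂ | ∃ x : X, z = Fin.snoc (x : Fin n → ℂ) (f x)})
    (hE₀ : E₀ = {z : Fin (n + 1) → ℂ | ∃ w ∈ X₀, z = Fin.snoc w 0})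
    (hsub : E₀ ⊆ Γ) :
    polyAlg (n + 1) Γ =
      {g : C(Γ, ℂ) |
        g.comp ⟨Set.inclusion hsub, continuous_inclusion hsub⟩ ∈ polyAlg (n + 1) E₀} := by
  have : CompactSpace X := isCompact_iff_compactSpace.1 hX
  obtain rfl : Γ = snocGraph f := hΓ
  have hfiber (t : ℂ) : IsCompact (Subtype.val '' (f ⁻¹' {t})) :=
    (isClosed_singleton.preimage f.continuous).isCompact.image continuous_subtype_val
  have : CompactSpace (snocGraph f) := isCompact_iff_compactSpace.1 (isCompact_snocGraph f)
  have : CompactSpace E₀ := by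
    rw [← isCompact_iff_compactSpace,
      show E₀ = (Fin.snoc · 0) '' X₀ by ext; simp [hE₀, eq_comm], hfib0]
    exact (hfiber 0).image (by fun_prop)
  ext g
  refine ⟨comp_inclusion_mem_polyAlg_s3 hsub, fun hg => mem_polyAlg_of_forall_fiber (Fin.last n)
    (isCompact_range f.continuous) hfX (fun _ => last_mem_range_of_mem_snocGraph) g
    fun t _ ε hε => ?_⟩
  rcases eq_or_ne t 0 with rfl | ht
  · obtain ⟨p, hp⟩ := exists_forall_norm_sub_lt_of_mem_polyAlg hg hε
    refine ⟨p, fun z hz => hp ⟨z, hE₀ ▸ ⟨Fin.init (z : Fin (n + 1) → ℂ), ?_, ?_⟩⟩⟩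
    · exact hfib0 ▸ hz ▸ init_mem_fiber_of_mem_snocGraph z.2
    · rw [← hz, Fin.snoc_init_self]
  · have : CompactSpace _ := isCompact_iff_compactSpace.1 (hfiber t)
    exact exists_forall_norm_sub_lt_on_slice (hfibers t ht) (fun _ => snoc_mem_snocGraph)
      (fun z hz hzt => hzt ▸ init_mem_fiber_of_mem_snocGraph hz) g hε

theorem stmt3 (n : ℕ) (X : Set (Fin n → ℂ)) (hX : IsCompact X)
    (X₀ : Set (Fin n → ℂ)) (hX₀closed : IsClosed X₀) (hX₀sub : X₀ ⊆ X)
    (f : C(X, ℂ))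
    (hfib0 : X₀ = Subtype.val '' (f ⁻¹' {0}))
    (hfX : polyAlg1 (Set.range f) = Set.univ)
    (hfibers : ∀ t : ℂ, t ≠ 0 →
      polyAlg n (Subtype.val '' (f ⁻¹' {t})) = Set.univ)
    -- the graph of `f` and the set `X₀ × {0}` inside it
    (Γ E₀ : Set (Fin (n + 1) → ℂ))
    (hΓ : Γ = {z : Fin (n + 1) → ℂ | ∃ x : X, z = Fin.snoc (x : Fin n → ℂ) (f x)})
    (hE₀ : E₀ = {z : Fin (n + 1) → ℂ | ∃ w ∈ X₀, z = Fin.snoc w 0})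
    (hsub : E₀ ⊆ Γ) :
    polyAlg (n + 1) Γ =
      {g : C(Γ, ℂ) |
        g.comp ⟨Set.inclusion hsub, continuous_inclusion hsub⟩ ∈ polyAlg (n + 1) E₀} :=
  stmt3_general n X hX X₀ f hfib0 hfX hfibers Γ E₀ hΓ hE₀ hsub
end

section
/- Let K be a compact subset of f(X) \ {0} for X, f as above with P(f(X)) = C(f(X)); then the set E_f = {(z, f(z)) : z ∈ X, f(z) ∈ K} is a peak set for P(Γ_f): there exists h ∈ P(Γ_f) with h = 1 on E_f and |h| < 1 on Γ_f \ E_f. -/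
open MvPolynomial

theorem stmt4 (n : ℕ) (X : Set (Fin n → ℂ)) (hX : IsCompact X)
    (f : C(X, ℂ))
    (hfX : polyAlg1 (Set.range f) = Set.univ)
    (K : Set ℂ) (hK : IsCompact K) (hKsub : K ⊆ Set.range f \ {0})
    -- the graph of `f` and the set `E_f` over `K` inside it
    (Γ Ef : Set (Fin (n + 1) → ℂ))
    (hΓ : Γ = {z : Fin (n + 1) → ℂ | ∃ x : X, z = Fin.snoc (x : Fin n → ℂ) (f x)})
    (hEf : Ef = {z : Fin (n + 1) → ℂ | ∃ x : X, f x ∈ K ∧ z = Fin.snoc (x : Fin n → ℂ) (f x)}) :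
    ∃ h : C(Γ, ℂ), h ∈ polyAlg (n + 1) Γ ∧
      (∀ z : Γ, (z : Fin (n + 1) → ℂ) ∈ Ef → h z = 1) ∧
      (∀ z : Γ, (z : Fin (n + 1) → ℂ) ∉ Ef → ‖h z‖ < 1) := by
  by_cases hKe : K = ∅
  · refine ⟨0, ?_, ?_, ?_⟩
    · exact subset_closure ⟨0, fun x => by simp⟩
    · rintro z hz
      rw [hEf] at hz
      obtain ⟨x, hx, _⟩ := hz
      simp [hKe] at hx
    · intro z _
      simp
  · have hKne : K.Nonempty := Set.nonempty_iff_ne_empty.2 hKe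
    set Y := Set.range f with hY
    -- the last-coordinate map Γ → Y
    have hmem : ∀ z : Γ, (z : Fin (n + 1) → ℂ) (Fin.last n) ∈ Y := by
      rintro ⟨z, hz⟩
      rw [hΓ] at hz
      obtain ⟨x, rfl⟩ := hz
      simp only [Fin.snoc_last]
      exact ⟨x, rfl⟩
    let π : C(Γ, Y) :=
      ⟨fun z => ⟨(z : Fin (n + 1) → ℂ) (Fin.last n), hmem z⟩,
        Continuous.subtype_mk ((continuous_apply (Fin.last n)).comp continuous_subtype_val) _⟩
    -- the peak function on Y
    have hdc : Continuous fun y : Y => 1 + Metric.infDist (y : ℂ) K :=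
      continuous_const.add ((Metric.continuous_infDist_pt K).comp continuous_subtype_val)
    have hdne : ∀ y : Y, (1 + Metric.infDist (y : ℂ) K) ≠ 0 := by
      intro y
      have := Metric.infDist_nonneg (x := (y : ℂ)) (s := K)
      positivity
    let g : C(Y, ℂ) :=
      ⟨fun y => ((1 + Metric.infDist (y : ℂ) K)⁻¹ : ℝ),
        Complex.continuous_ofReal.comp (hdc.inv₀ hdne)⟩
    have hg : g ∈ polyAlg1 Y := by rw [hfX]; trivial
    refine ⟨g.comp π, ?_, ?_, ?_⟩
    · -- membership in polyAlg via continuity of precomposition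
      have hcont : Continuous fun q : C(Y, ℂ) => q.comp π := ContinuousMap.continuous_precomp π
      have himg : (fun q : C(Y, ℂ) => q.comp π) ''
          {q : C(Y, ℂ) | ∃ p : Polynomial ℂ, ∀ y : Y, q y = p.eval (y : ℂ)} ⊆
          {h : C(Γ, ℂ) | ∃ p : MvPolynomial (Fin (n + 1)) ℂ,
            ∀ z : Γ, h z = eval (z : Fin (n + 1) → ℂ) p} := by
        rintro _ ⟨q, ⟨p, hp⟩, rfl⟩
        refine ⟨p.eval₂ MvPolynomial.C (MvPolynomial.X (Fin.last n)), fun z => ?_⟩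
        have := Polynomial.hom_eval₂ p MvPolynomial.C
          (MvPolynomial.eval (z : Fin (n + 1) → ℂ)) (MvPolynomial.X (Fin.last n))
        rw [this]
        have : ((MvPolynomial.eval (z : Fin (n + 1) → ℂ)).comp
            (MvPolynomial.C : ℂ →+* MvPolynomial (Fin (n + 1)) ℂ)) = RingHom.id ℂ := by
          ext c; simp
        rw [this]
        simp only [ContinuousMap.comp_apply, hp (π z), MvPolynomial.eval_X]
        rw [← Polynomial.eval]
        rfl
      exact map_mem_closure (f := fun q : C(Y, ℂ) => q.comp π) hcont hg
        (fun q hq => himg (Set.mem_image_of_mem _ hq))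
    · rintro z hz
      rw [hEf] at hz
      obtain ⟨x, hxK, hzx⟩ := hz
      have hlast : (z : Fin (n + 1) → ℂ) (Fin.last n) = f x := by
        rw [hzx]; exact Fin.snoc_last _ _
      show ((1 + Metric.infDist ((π z : ℂ)) K)⁻¹ : ℝ) = (1 : ℂ)
      have : (π z : ℂ) = f x := hlast
      rw [this, Metric.infDist_zero_of_mem hxK]
      norm_num
    · rintro z hz
      obtain ⟨x, hzx⟩ := (Set.ext_iff.1 hΓ (z : Fin (n + 1) → ℂ)).1 z.2
      have hxK : f x ∉ K := by
        intro hmemK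
        exact hz ((Set.ext_iff.1 hEf (z : Fin (n + 1) → ℂ)).2 ⟨x, hmemK, hzx⟩)
      have hlast : (π z : ℂ) = f x := by
        show (z : Fin (n + 1) → ℂ) (Fin.last n) = f x
        rw [hzx]; exact Fin.snoc_last _ _
      have hpos : 0 < Metric.infDist (f x) K :=
        (hK.isClosed.notMem_iff_infDist_pos hKne).1 hxK
      show ‖(((1 + Metric.infDist ((π z : ℂ)) K)⁻¹ : ℝ) : ℂ)‖ < 1
      rw [hlast, Complex.norm_real]
      rw [Real.norm_eq_abs, abs_of_pos (by positivity)]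
      rw [inv_lt_one_iff₀]
      right; linarith
end

section
/- Let 𝕊 ⊂ ℂ² be the sphere {(x₁ + i x₂, x₃) : x₁² + x₂² + x₃² = 1} and φ(z₁,z₂) = (z₁², z₁z₂). Then the tangent plane of the surface ℙ = φ(𝕊) at a point φ(p) is a complex line only when φ(p) = (0,0) (i.e., when p = (0, ±1)); at all other points of ℙ the tangent plane is totally real. -/
open Complex

/-- The unit 2-sphere embedded in `ℂ²` as `{(x₁ + i x₂, x₃) : x₁² + x₂² + x₃² = 1}`. -/
def unitSphereC2 : Set (ℂ × ℂ) :=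
  {p : ℂ × ℂ | p.2.im = 0 ∧ ‖p.1‖ ^ 2 + p.2.re ^ 2 = 1}

/-- The tangent space to the sphere at `p`: vectors lying in the hyperplane `x₄ = 0`
and orthogonal to `p` in `ℝ³`. -/
def sphereTangent (p : ℂ × ℂ) : Set (ℂ × ℂ) :=
  {v : ℂ × ℂ | v.2.im = 0 ∧ p.1.re * v.1.re + p.1.im * v.1.im + p.2.re * v.2.re = 0}

/-- The tangent plane to `ℙ = φ(𝕊)` at `φ(p)`: the image of the tangent space of the
sphere at `p` under the derivative of `φ(z₁,z₂) = (z₁², z₁z₂)` at `p`. -/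
def projPlaneTangent (p : ℂ × ℂ) : Set (ℂ × ℂ) :=
  (fun v : ℂ × ℂ => (2 * p.1 * v.1, p.1 * v.2 + p.2 * v.1)) '' sphereTangent p

theorem stmt11 (p : ℂ × ℂ) (hp : p ∈ unitSphereC2) :
    (p.1 = 0 → projPlaneTangent p = {z : ℂ × ℂ | z.1 = 0}) ∧
    (p.1 ≠ 0 →
      ∀ z ∈ projPlaneTangent p, (I * z.1, I * z.2) ∈ projPlaneTangent p → z = 0) := by
  obtain ⟨him, hnorm⟩ := hp
  constructor
  · intro h1
    have hp2 : p.2 ≠ 0 := by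
      intro h
      rw [h1, h] at hnorm
      simp at hnorm
    ext z
    simp only [projPlaneTangent, sphereTangent, Set.mem_image, Set.mem_setOf_eq]
    constructor
    · rintro ⟨v, hv, rfl⟩
      simp [h1]
    · intro hz
      refine ⟨(z.2 / p.2, 0), ⟨by simp, by simp [h1]⟩, ?_⟩
      rw [Prod.ext_iff]
      constructor
      · rw [h1, hz]; ring
      · simp [mul_div_cancel₀ _ hp2]
  · intro hne z hz hiz
    obtain ⟨v, ⟨hv2, hvc⟩, hveq⟩ := hz
    obtain ⟨w, ⟨hw2, hwc⟩, hweq⟩ := hiz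
    simp only [Prod.ext_iff] at hveq hweq
    obtain ⟨hv1e, hv2e⟩ := hveq
    obtain ⟨hw1e, hw2e⟩ := hweq
    -- w.1 = I * v.1
    have hw1 : w.1 = I * v.1 := by
      have h2 : (2 : ℂ) * p.1 ≠ 0 := by simp [hne]
      refine mul_left_cancel₀ h2 ?_
      rw [hw1e, ← hv1e]; ring
    have hwv2 : w.2 = I * v.2 := by
      rw [← hv2e, hw1] at hw2e
      have : p.1 * w.2 = p.1 * (I * v.2) := by ring_nf; ring_nf at hw2e; linear_combination hw2e
      exact mul_left_cancel₀ hne this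
    -- v.2 = 0
    have hv20 : v.2 = 0 := by
      have : (I * v.2).im = 0 := by rw [← hwv2]; exact hw2
      simp [Complex.mul_im] at this
      exact Complex.ext this hv2
    -- constraints
    have hvc' : p.1.re * v.1.re + p.1.im * v.1.im = 0 := by
      rw [hv20] at hvc; simpa using hvc
    have hwc' : - p.1.re * v.1.im + p.1.im * v.1.re = 0 := by
      rw [hw1, hwv2, hv20] at hwc
      simp [Complex.mul_re, Complex.mul_im] at hwc
      linarith
    have hsq : p.1.re ^ 2 + p.1.im ^ 2 ≠ 0 := by
      intro h
      have hre : p.1.re = 0 := by nlinarith [sq_nonneg p.1.re, sq_nonneg p.1.im]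
      have himm : p.1.im = 0 := by nlinarith [sq_nonneg p.1.re, sq_nonneg p.1.im]
      exact hne (Complex.ext (by simp [hre]) (by simp [himm]))
    have hx : v.1.re = 0 := by
      have h : (p.1.re ^ 2 + p.1.im ^ 2) * v.1.re = 0 := by
        linear_combination p.1.re * hvc' + p.1.im * hwc'
      exact (mul_eq_zero.mp h).resolve_left hsq
    have hy : v.1.im = 0 := by
      have h : (p.1.re ^ 2 + p.1.im ^ 2) * v.1.im = 0 := by
        linear_combination p.1.im * hvc' - p.1.re * hwc'
      exact (mul_eq_zero.mp h).resolve_left hsq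
    have hv10 : v.1 = 0 := Complex.ext hx hy
    rw [Prod.ext_iff]
    constructor
    · rw [← hv1e, hv10]; simp
    · rw [← hv2e, hv10, hv20]; simp
end
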